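/- arXiv:1001.4865 — 5 statements merged into one kernel-verified Lean document; each statement's English description precedes it below -/
import Mathlib

section
/- Let m : (ℝ_{>0})^4 → (ℝ_{>0})^4 be defined by m(u) = ((u₁+u₂+u₃+u₄)/4, √((u₁+u₃)(u₂+u₄))/2, √((u₁+u₂)(u₃+u₄))/2, √((u₁u₄+u₂u₃)/2)). If c₁ > c₂ > c₃ > c₄ > 0, then m₁(c) > m₂(c) > m₃(c) > m₄(c). -/
noncomputable def m (u : ℝ × ℝ × ℝ × ℝ) : ℝ × ℝ × ℝ × ℝ :=
  ((u.1 + u.2.1 + u.2.2.1 + u.2.2.2) / 4,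
   Real.sqrt ((u.1 + u.2.2.1) * (u.2.1 + u.2.2.2)) / 2,
   Real.sqrt ((u.1 + u.2.1) * (u.2.2.1 + u.2.2.2)) / 2,
   Real.sqrt ((u.1 * u.2.2.2 + u.2.1 * u.2.2.1) / 2))

theorem stmt0 (c₁ c₂ c₃ c₄ : ℝ) (h4 : 0 < c₄) (h34 : c₄ < c₃) (h23 : c₃ < c₂)
    (h12 : c₂ < c₁) :
    (m (c₁, c₂, c₃, c₄)).2.1 < (m (c₁, c₂, c₃, c₄)).1 ∧
    (m (c₁, c₂, c₃, c₄)).2.2.1 < (m (c₁, c₂, c₃, c₄)).2.1 ∧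
    (m (c₁, c₂, c₃, c₄)).2.2.2 < (m (c₁, c₂, c₃, c₄)).2.2.1 := by
  simp only [m]
  refine ⟨?_, ?_, ?_⟩
  · have h : Real.sqrt ((c₁ + c₃) * (c₂ + c₄)) < (c₁ + c₂ + c₃ + c₄) / 2 := by
      rw [Real.sqrt_lt' (by linarith)]
      nlinarith [sq_nonneg ((c₁ + c₃) - (c₂ + c₄))]
    linarith
  · have h : Real.sqrt ((c₁ + c₂) * (c₃ + c₄)) < Real.sqrt ((c₁ + c₃) * (c₂ + c₄)) := by
      apply Real.sqrt_lt_sqrt (by nlinarith)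
      nlinarith [mul_pos (sub_pos.2 (lt_trans h34 (lt_trans h23 h12))) (sub_pos.2 h23)]
    linarith
  · have hpos : 0 < Real.sqrt ((c₁ + c₂) * (c₃ + c₄)) := Real.sqrt_pos.2 (by nlinarith)
    rw [Real.sqrt_lt' (by linarith)]
    have hsq : (Real.sqrt ((c₁ + c₂) * (c₃ + c₄))) ^ 2 = (c₁ + c₂) * (c₃ + c₄) :=
      Real.sq_sqrt (by nlinarith)
    rw [div_pow, hsq]
    nlinarith [mul_pos (sub_pos.2 h12) (sub_pos.2 h34)]
end

section
/- With m as above, if c₁ > c₂ > c₃ > c₄ > 0, then m₁(c)² − m₄(c)² < (c₁−c₄)²/2. -/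
theorem stmt2 (c₁ c₂ c₃ c₄ : ℝ) (h4 : 0 < c₄) (h34 : c₄ < c₃) (h23 : c₃ < c₂)
    (h12 : c₂ < c₁) :
    (m (c₁, c₂, c₃, c₄)).1 ^ 2 - (m (c₁, c₂, c₃, c₄)).2.2.2 ^ 2
      < (c₁ - c₄) ^ 2 / 2 := by
  simp only [m]
  rw [Real.sq_sqrt (by nlinarith : (0:ℝ) ≤ (c₁ * c₄ + c₂ * c₃) / 2)]
  nlinarith [sq_nonneg (c₁ - c₂ + c₃ - c₄), mul_pos (sub_pos.2 h23) (sub_pos.2 h12),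
    mul_pos (sub_pos.2 h34) (sub_pos.2 h12), sq_nonneg (c₁ - c₄), sq_nonneg (c₂ - c₃),
    mul_pos (sub_pos.2 h34) (sub_pos.2 h23)]
end

section
/- With m as above and c₁ > c₂ > c₃ > c₄ > 0, the iterates mⁿ(c) satisfy c₄ < m₄(c) < m₄²(c) < ⋯ < m₄ⁿ(c) < m₁ⁿ(c) < ⋯ < m₁(c) < c₁; in particular the sequences n ↦ m₁ⁿ(c) and n ↦ m₄ⁿ(c) are respectively monotone decreasing and increasing, hence convergent. -/
def MOrd (u : ℝ × ℝ × ℝ × ℝ) : Prop :=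
  0 < u.2.2.2 ∧ u.2.2.2 < u.2.2.1 ∧ u.2.2.1 < u.2.1 ∧ u.2.1 < u.1

lemma ord_m {u : ℝ × ℝ × ℝ × ℝ} (h : MOrd u) : MOrd (m u) := by
  obtain ⟨a, b, c, d⟩ := u
  obtain ⟨hd, hdc, hcb, hba⟩ := h
  simp only [MOrd, m] at *
  have ha : 0 < a := by linarith
  have hb : 0 < b := by linarith
  have hc : 0 < c := by linarith
  refine ⟨?_, ?_, ?_, ?_⟩
  · apply Real.sqrt_pos.mpr; nlinarith
  · -- m₄ < m₃
    have h1 : Real.sqrt ((a + b) * (c + d)) / 2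
        = Real.sqrt ((a + b) * (c + d) / 4) := by
      rw [show (4:ℝ) = 2^2 by norm_num, Real.sqrt_div (by nlinarith),
        Real.sqrt_sq (by norm_num)]
    rw [h1]
    apply Real.sqrt_lt_sqrt (by nlinarith)
    nlinarith [mul_pos (show (0:ℝ) < a - b by linarith) (show (0:ℝ) < c - d by linarith)]
  · -- m₃ < m₂
    have h2 : Real.sqrt ((a + b) * (c + d)) < Real.sqrt ((a + c) * (b + d)) := by
      apply Real.sqrt_lt_sqrt (by nlinarith)
      nlinarith [mul_pos (show (0:ℝ) < a - d by linarith) (show (0:ℝ) < b - c by linarith)]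
    linarith
  · -- m₂ < m₁
    rw [div_lt_div_iff₀ (by norm_num) (by norm_num)]
    have h2 : Real.sqrt ((a + c) * (b + d)) < (a + b + c + d) / 2 := by
      rw [show (a + b + c + d) / 2 = ((a+c) + (b+d)) / 2 by ring]
      apply (Real.sqrt_lt' (by linarith)).mpr
      nlinarith [mul_pos (show (0:ℝ) < a + c - (b + d) by linarith)
        (show (0:ℝ) < a + c - (b + d) by linarith)]
    linarith

theorem stmt3 (c₁ c₂ c₃ c₄ : ℝ) (h4 : 0 < c₄) (h34 : c₄ < c₃) (h23 : c₃ < c₂)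
    (h12 : c₂ < c₁) :
    StrictAnti (fun n => (m^[n] (c₁, c₂, c₃, c₄)).1) ∧
    StrictMono (fun n => (m^[n] (c₁, c₂, c₃, c₄)).2.2.2) ∧
    (∀ n : ℕ, (m^[n] (c₁, c₂, c₃, c₄)).2.2.2 < (m^[n] (c₁, c₂, c₃, c₄)).1) ∧
    (∃ L₁ : ℝ, Filter.Tendsto (fun n => (m^[n] (c₁, c₂, c₃, c₄)).1)
      Filter.atTop (nhds L₁)) ∧
    (∃ L₄ : ℝ, Filter.Tendsto (fun n => (m^[n] (c₁, c₂, c₃, c₄)).2.2.2)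
      Filter.atTop (nhds L₄)) := by
  set c : ℝ × ℝ × ℝ × ℝ := (c₁, c₂, c₃, c₄) with hc
  have hOrd : ∀ n, MOrd (m^[n] c) := by
    intro n
    induction n with
    | zero => exact ⟨h4, h34, h23, h12⟩
    | succ k ih => rw [Function.iterate_succ_apply']; exact ord_m ih
  have hA : StrictAnti (fun n => (m^[n] c).1) := by
    apply strictAnti_nat_of_succ_lt
    intro n
    have h := hOrd n
    obtain ⟨hd, hdc, hcb, hba⟩ := h
    rw [Function.iterate_succ_apply']
    show (m (m^[n] c)).1 < (m^[n] c).1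
    simp only [m]
    linarith
  have hM : StrictMono (fun n => (m^[n] c).2.2.2) := by
    apply strictMono_nat_of_lt_succ
    intro n
    have h := hOrd n
    obtain ⟨hd, hdc, hcb, hba⟩ := h
    rw [Function.iterate_succ_apply']
    show (m^[n] c).2.2.2 < (m (m^[n] c)).2.2.2
    simp only [m]
    apply (Real.lt_sqrt hd.le).mpr
    nlinarith
  have hlt : ∀ n : ℕ, (m^[n] c).2.2.2 < (m^[n] c).1 := by
    intro n
    obtain ⟨hd, hdc, hcb, hba⟩ := hOrd n
    linarith
  refine ⟨hA, hM, hlt, ?_, ?_⟩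
  · refine ⟨_, tendsto_atTop_ciInf hA.antitone ⟨c₄, ?_⟩⟩
    rintro x ⟨n, rfl⟩
    have h1 : (m^[0] c).2.2.2 ≤ (m^[n] c).2.2.2 := hM.monotone (Nat.zero_le n)
    simp only [Function.iterate_zero_apply] at h1
    have := hlt n
    simp only [hc] at h1 ⊢
    linarith
  · refine ⟨_, tendsto_atTop_ciSup hM.monotone ⟨c₁, ?_⟩⟩
    rintro x ⟨n, rfl⟩
    have h1 : (m^[n] c).1 ≤ (m^[0] c).1 := hA.antitone (Nat.zero_le n)
    simp only [Function.iterate_zero_apply] at h1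
    have := hlt n
    simp only [hc] at h1 ⊢
    linarith
end

section
/- With m as above and c₁ > c₂ > c₃ > c₄ > 0, all four component sequences m₁ⁿ(c), m₂ⁿ(c), m₃ⁿ(c), m₄ⁿ(c) converge to a common positive limit m⁎^∞(c). -/
private lemma sqrt_le_of_sq (x y : ℝ) (hy : 0 ≤ y) (h : x ≤ y^2) : Real.sqrt x ≤ y := by
  calc Real.sqrt x ≤ Real.sqrt (y^2) := Real.sqrt_le_sqrt h
  _ = y := Real.sqrt_sq hy

private lemma step_lemma (a b c d : ℝ) (hd : 0 < d) (hcd : d ≤ c) (hbc : c ≤ b)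
    (hab : b ≤ a) :
    Real.sqrt ((a + c) * (b + d)) / 2 ≤ (a + b + c + d) / 4 ∧
    Real.sqrt ((a + b) * (c + d)) / 2 ≤ Real.sqrt ((a + c) * (b + d)) / 2 ∧
    Real.sqrt ((a * d + b * c) / 2) ≤ Real.sqrt ((a + b) * (c + d)) / 2 ∧
    d ≤ Real.sqrt ((a * d + b * c) / 2) ∧
    ((a + b + c + d) / 4 - Real.sqrt ((a * d + b * c) / 2)) * ((a - d) + 8 * d)
      ≤ (a - d)^2 := by
  have h1 : Real.sqrt ((a + c) * (b + d)) / 2 ≤ (a + b + c + d) / 4 := by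
    have : Real.sqrt ((a + c) * (b + d)) ≤ (a + b + c + d) / 2 := by
      apply sqrt_le_of_sq _ _ (by linarith)
      nlinarith [sq_nonneg (a + c - b - d)]
    linarith
  have h2 : Real.sqrt ((a + b) * (c + d)) / 2 ≤ Real.sqrt ((a + c) * (b + d)) / 2 := by
    have : Real.sqrt ((a + b) * (c + d)) ≤ Real.sqrt ((a + c) * (b + d)) := by
      apply Real.sqrt_le_sqrt
      nlinarith [mul_nonneg (by linarith : (0:ℝ) ≤ a - d) (by linarith : (0:ℝ) ≤ b - c)]
    linarith
  have h3 : Real.sqrt ((a * d + b * c) / 2) ≤ Real.sqrt ((a + b) * (c + d)) / 2 := by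
    apply sqrt_le_of_sq
    · positivity
    · have hs : Real.sqrt ((a + b) * (c + d)) ^ 2 = (a + b) * (c + d) := by
        apply Real.sq_sqrt; nlinarith
      rw [div_pow, hs]
      nlinarith [mul_nonneg (by linarith : (0:ℝ) ≤ a - b) (by linarith : (0:ℝ) ≤ c - d)]
  have h4 : d ≤ Real.sqrt ((a * d + b * c) / 2) :=
    (Real.le_sqrt hd.le (by nlinarith)).mpr (by nlinarith)
  refine ⟨h1, h2, h3, h4, ?_⟩
  set q := Real.sqrt ((a * d + b * c) / 2) with hq
  have hq2 : q ^ 2 = (a * d + b * c) / 2 := by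
    apply Real.sq_sqrt; nlinarith
  have hqa : q ≤ (a + b + c + d) / 4 := le_trans h3 (le_trans h2 h1)
  -- core polynomial inequality: (a+b+c+d)^2 ≤ 4a^2 + 4d^2 + 8bc
  have core : (a + b + c + d)^2 ≤ 4 * a^2 + 4 * d^2 + 8 * (b * c) := by
    nlinarith [mul_nonneg (by linarith : (0:ℝ) ≤ a - b) (by linarith : (0:ℝ) ≤ b - c),
      mul_nonneg (by linarith : (0:ℝ) ≤ a - b) (by linarith : (0:ℝ) ≤ c - d),
      mul_nonneg (by linarith : (0:ℝ) ≤ b - c) (by linarith : (0:ℝ) ≤ c - d),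
      sq_nonneg (a - b), sq_nonneg (c - d)]
  -- (v1 - q) * 4 * (v1 + q) = 4*(v1^2 - q^2) ≤ (a-d)^2 and (a-d) + 8d ≤ 4*(v1+q)
  have hsum : (a - d) + 8 * d ≤ 4 * ((a + b + c + d) / 4 + q) := by
    have : d ≤ q := h4
    linarith
  have hdiff : 0 ≤ (a + b + c + d) / 4 - q := by linarith
  calc ((a + b + c + d) / 4 - q) * ((a - d) + 8 * d)
      ≤ ((a + b + c + d) / 4 - q) * (4 * ((a + b + c + d) / 4 + q)) :=
        mul_le_mul_of_nonneg_left hsum hdiff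
    _ = 4 * (((a + b + c + d) / 4)^2 - q^2) := by ring
    _ ≤ (a - d)^2 := by rw [hq2]; nlinarith [core]

theorem stmt4 (c₁ c₂ c₃ c₄ : ℝ) (h4 : 0 < c₄) (h34 : c₄ < c₃) (h23 : c₃ < c₂)
    (h12 : c₂ < c₁) :
    ∃ L : ℝ, 0 < L ∧
      Filter.Tendsto (fun n => (m^[n] (c₁, c₂, c₃, c₄)).1) Filter.atTop (nhds L) ∧
      Filter.Tendsto (fun n => (m^[n] (c₁, c₂, c₃, c₄)).2.1) Filter.atTop (nhds L) ∧
      Filter.Tendsto (fun n => (m^[n] (c₁, c₂, c₃, c₄)).2.2.1) Filter.atTop (nhds L) ∧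
      Filter.Tendsto (fun n => (m^[n] (c₁, c₂, c₃, c₄)).2.2.2) Filter.atTop (nhds L) := by
  set P : ℝ × ℝ × ℝ × ℝ := (c₁, c₂, c₃, c₄) with hP
  set G : ℝ := c₁ - c₄ with hG
  have hGpos : 0 < G := by simp [hG]; linarith
  set θ : ℝ := G / (G + 8 * c₄) with hθ
  have hden : 0 < G + 8 * c₄ := by linarith
  have hθ0 : 0 ≤ θ := div_nonneg hGpos.le hden.le
  have hθ1 : θ < 1 := by rw [hθ, div_lt_one hden]; linarith
  set A : ℕ → ℝ := fun n => (m^[n] P).1 with hA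
  set B : ℕ → ℝ := fun n => (m^[n] P).2.1 with hB
  set C : ℕ → ℝ := fun n => (m^[n] P).2.2.1 with hC
  set D : ℕ → ℝ := fun n => (m^[n] P).2.2.2 with hD
  have hsucc : ∀ n, m^[n+1] P = m (m^[n] P) := fun n => Function.iterate_succ_apply' m n P
  have hcomp : ∀ n, A (n+1) = (A n + B n + C n + D n) / 4 ∧
      B (n+1) = Real.sqrt ((A n + C n) * (B n + D n)) / 2 ∧
      C (n+1) = Real.sqrt ((A n + B n) * (C n + D n)) / 2 ∧
      D (n+1) = Real.sqrt ((A n * D n + B n * C n) / 2) := by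
    intro n
    simp [hA, hB, hC, hD, hsucc n, m]
  -- main invariant
  have key : ∀ n, B n ≤ A n ∧ C n ≤ B n ∧ D n ≤ C n ∧ c₄ ≤ D n ∧
      A n - D n ≤ θ ^ n * G := by
    intro n
    induction n with
    | zero =>
      refine ⟨?_, ?_, ?_, ?_, ?_⟩ <;> simp [hA, hB, hC, hD, hP, hG] <;> linarith
    | succ n ih =>
      obtain ⟨iBA, iCB, iDC, iD, igap⟩ := ih
      have hDpos : 0 < D n := lt_of_lt_of_le h4 iD
      obtain ⟨s1, s2, s3, s4, s5⟩ := step_lemma (A n) (B n) (C n) (D n) hDpos iDC iCB iBA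
      obtain ⟨e1, e2, e3, e4⟩ := hcomp n
      have hgap0 : 0 ≤ A n - D n := by linarith
      have hgapG : A n - D n ≤ G := by
        have : θ ^ n ≤ 1 := pow_le_one₀ hθ0 hθ1.le
        calc A n - D n ≤ θ ^ n * G := igap
          _ ≤ 1 * G := mul_le_mul_of_nonneg_right this hGpos.le
          _ = G := one_mul G
      refine ⟨?_, ?_, ?_, ?_, ?_⟩
      · rw [e1, e2]; exact s1
      · rw [e2, e3]; exact s2
      · rw [e3, e4]; exact s3
      · rw [e4]; linarith [s4]
      -- contraction
      · have hnd : 0 ≤ A (n+1) - D (n+1) := by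
          have : D (n+1) ≤ A (n+1) := by
            rw [e1, e4]
            exact le_trans s3 (le_trans s2 s1)
          linarith
        have h5 : (A (n+1) - D (n+1)) * ((A n - D n) + 8 * c₄) ≤ (A n - D n)^2 := by
          calc (A (n+1) - D (n+1)) * ((A n - D n) + 8 * c₄)
              ≤ (A (n+1) - D (n+1)) * ((A n - D n) + 8 * D n) := by
                apply mul_le_mul_of_nonneg_left _ hnd; linarith
            _ ≤ (A n - D n)^2 := by rw [e1, e4]; exact s5
        have hgd : 0 < (A n - D n) + 8 * c₄ := by linarith
        have h6 : (A (n+1) - D (n+1)) * (G + 8 * c₄) ≤ G * (A n - D n) := by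
          have h7 : ((A (n+1) - D (n+1)) * (G + 8 * c₄)) * ((A n - D n) + 8 * c₄)
              ≤ (G * (A n - D n)) * ((A n - D n) + 8 * c₄) := by
            nlinarith [mul_le_mul_of_nonneg_right h5 hden.le,
              mul_nonneg (mul_nonneg hgap0 (by linarith : (0:ℝ) ≤ G - (A n - D n))) h4.le]
          exact le_of_mul_le_mul_right h7 hgd
        have h8 : A (n+1) - D (n+1) ≤ θ * (A n - D n) := by
          rw [hθ, div_mul_eq_mul_div, le_div_iff₀ hden]
          linarith [h6]
        calc A (n+1) - D (n+1) ≤ θ * (A n - D n) := h8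
          _ ≤ θ * (θ ^ n * G) := mul_le_mul_of_nonneg_left igap hθ0
          _ = θ ^ (n+1) * G := by ring
  -- A is antitone and bounded below
  have hAanti : Antitone A := by
    apply antitone_nat_of_succ_le
    intro n
    obtain ⟨iBA, iCB, iDC, iD, _⟩ := key n
    rw [(hcomp n).1]
    linarith
  have hAlb : ∀ n, c₄ ≤ A n := by
    intro n
    obtain ⟨iBA, iCB, iDC, iD, _⟩ := key n
    linarith
  have hbdd : BddBelow (Set.range A) := ⟨c₄, by rintro x ⟨n, rfl⟩; exact hAlb n⟩
  have hAtend : Filter.Tendsto A Filter.atTop (nhds (⨅ n, A n)) :=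
    tendsto_atTop_ciInf hAanti hbdd
  set L : ℝ := ⨅ n, A n with hL
  have hLpos : 0 < L := lt_of_lt_of_le h4 (le_ciInf hAlb)
  -- gap tends to zero
  have hgap_tend : Filter.Tendsto (fun n => A n - D n) Filter.atTop (nhds 0) := by
    have hg : Filter.Tendsto (fun n : ℕ => θ ^ n * G) Filter.atTop (nhds 0) := by
      have : Filter.Tendsto (fun n : ℕ => θ ^ n) Filter.atTop (nhds 0) :=
        tendsto_pow_atTop_nhds_zero_of_lt_one hθ0 hθ1
      simpa using this.mul_const G
    exact squeeze_zero (fun n => by linarith [(key n).1, (key n).2.1, (key n).2.2.1])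
      (fun n => (key n).2.2.2.2) hg
  have tend_of_between : ∀ F : ℕ → ℝ, (∀ n, D n ≤ F n) → (∀ n, F n ≤ A n) →
      Filter.Tendsto F Filter.atTop (nhds L) := by
    intro F hDF hFA
    have h0 : Filter.Tendsto (fun n => A n - F n) Filter.atTop (nhds 0) := by
      apply squeeze_zero (fun n => by linarith [hFA n]) (fun n => by linarith [hDF n])
        hgap_tend
    have := hAtend.sub h0
    simpa using this
  refine ⟨L, hLpos, ?_, ?_, ?_, ?_⟩
  · exact hAtend
  · exact tend_of_between B (fun n => by linarith [(key n).2.1, (key n).2.2.1])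
      (fun n => (key n).1)
  · exact tend_of_between C (fun n => (key n).2.2.1)
      (fun n => by linarith [(key n).1, (key n).2.1])
  · exact tend_of_between D (fun n => le_refl _)
      (fun n => by linarith [(key n).1, (key n).2.1, (key n).2.2.1])
end

section
/- With m as above and c₁ > c₂ > c₃ > c₄ > 0, one has (m₁(c)² − m₂(c)²)/(m₃(c)² − m₄(c)²) = (1/4)·((c₁−c₂)/(c₃−c₄) + 2 + (c₃−c₄)/(c₁−c₂)) ≥ 1. -/
theorem stmt7 (c₁ c₂ c₃ c₄ : ℝ) (h4 : 0 < c₄) (h34 : c₄ < c₃) (h23 : c₃ < c₂)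
    (h12 : c₂ < c₁) :
    ((m (c₁, c₂, c₃, c₄)).1 ^ 2 - (m (c₁, c₂, c₃, c₄)).2.1 ^ 2) /
        ((m (c₁, c₂, c₃, c₄)).2.2.1 ^ 2 - (m (c₁, c₂, c₃, c₄)).2.2.2 ^ 2)
      = (1 / 4) * ((c₁ - c₂) / (c₃ - c₄) + 2 + (c₃ - c₄) / (c₁ - c₂)) ∧
    1 ≤ (1 / 4) * ((c₁ - c₂) / (c₃ - c₄) + 2 + (c₃ - c₄) / (c₁ - c₂)) := by
  have h1 : 0 < c₁ := by linarith
  have h2 : 0 < c₂ := by linarith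
  have h3 : 0 < c₃ := by linarith
  have hx : 0 < c₁ - c₂ := by linarith
  have hy : 0 < c₃ - c₄ := by linarith
  have s1 : Real.sqrt ((c₁ + c₃) * (c₂ + c₄)) ^ 2 = (c₁ + c₃) * (c₂ + c₄) :=
    Real.sq_sqrt (by positivity)
  have s2 : Real.sqrt ((c₁ + c₂) * (c₃ + c₄)) ^ 2 = (c₁ + c₂) * (c₃ + c₄) :=
    Real.sq_sqrt (by positivity)
  have s3 : Real.sqrt ((c₁ * c₄ + c₂ * c₃) / 2) ^ 2 = (c₁ * c₄ + c₂ * c₃) / 2 :=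
    Real.sq_sqrt (by positivity)
  constructor
  · simp only [m]
    simp only [div_pow, s1, s2, s3]
    rw [div_eq_iff (by nlinarith)]
    field_simp
    ring
  · rw [← sub_nonneg]
    have key : (1 / 4) * ((c₁ - c₂) / (c₃ - c₄) + 2 + (c₃ - c₄) / (c₁ - c₂)) - 1
        = ((c₁ - c₂) - (c₃ - c₄)) ^ 2 / (4 * (c₃ - c₄) * (c₁ - c₂)) := by
      field_simp
      ring
    linarith [key ▸ (by positivity : (0:ℝ) ≤ ((c₁ - c₂) - (c₃ - c₄)) ^ 2 / (4 * (c₃ - c₄) * (c₁ - c₂)))]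
end
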